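/- Let ε > 0, T > 0, and let u : [0,T] × ℝ² → ℝ³ be a smooth solution of ε ∂_t u − η ( u × ∂_t u ) = Δu − ⟨∇u, η∇u⟩ u such that u and its first and second order derivatives are bounded on [0,T] × ℝ². If ⟨u(0,x), η u(0,x)⟩ = −1 for all x ∈ ℝ², then ⟨u(t,x), η u(t,x)⟩ = −1 for all (t,x) ∈ [0,T] × ℝ²; i.e. the flow preserves the constraint that u take values in the hyperboloid −u₀² + u₁² + u₂² = −1. -/

import Mathlib

noncomputable section
open MeasureTheory Filter Topology

/-- Vectors in `ℝ³`. -/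
abbrev V3 := Fin 3 → ℝ

/-- Cross product on `ℝ³`. -/
def cross3 (v w : V3) : V3 := crossProduct v w

/-- The Lorentz metric `η = diag(−1,1,1)` applied to a vector. -/
def etaV (v : V3) : V3 := fun i => if i = 0 then -v i else v i

/-- Lorentz pairing `⟨v, ηw⟩ = −v₀w₀ + v₁w₁ + v₂w₂`. -/
def mdot (v w : V3) : ℝ := -(v 0 * w 0) + v 1 * w 1 + v 2 * w 2

/-- Time derivative of a function of `(t,x) ∈ ℝ × ℝ²`. -/
def Dt {E : Type*} [NormedAddCommGroup E] [NormedSpace ℝ E]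
    (f : ℝ × (Fin 2 → ℝ) → E) (p : ℝ × (Fin 2 → ℝ)) : E :=
  fderiv ℝ f p (1, 0)

/-- Spatial partial derivative `∂_k` of a function of `(t,x) ∈ ℝ × ℝ²`. -/
def Dx {E : Type*} [NormedAddCommGroup E] [NormedSpace ℝ E]
    (k : Fin 2) (f : ℝ × (Fin 2 → ℝ) → E) (p : ℝ × (Fin 2 → ℝ)) : E :=
  fderiv ℝ f p (0, Pi.single k 1)


abbrev P2 := ℝ × (Fin 2 → ℝ)

def DD {E : Type*} [NormedAddCommGroup E] [NormedSpace ℝ E]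
    (v : P2) (f : P2 → E) (p : P2) : E := fderiv ℝ f p v

-- toolkit (already tested)
lemma contDiff_DD {E : Type*} [NormedAddCommGroup E] [NormedSpace ℝ E]
    (v : P2) {f : P2 → E} (hf : ContDiff ℝ (⊤ : ℕ∞) f) : ContDiff ℝ (⊤ : ℕ∞) (DD v f) := by
  have h := hf.fderiv_right (m := (⊤ : ℕ∞)) (by simp)
  exact (ContinuousLinearMap.apply ℝ E v).contDiff.comp h

lemma DD_mul {f g : P2 → ℝ} {p : P2} (hf : DifferentiableAt ℝ f p)
    (hg : DifferentiableAt ℝ g p) (v : P2) :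
    DD v (fun q => f q * g q) p = DD v f p * g p + f p * DD v g p := by
  have := fderiv_fun_mul hf hg
  simp only [DD, this]
  simp [ContinuousLinearMap.add_apply, ContinuousLinearMap.smul_apply, smul_eq_mul]
  ring

lemma DD_sub {f g : P2 → ℝ} {p : P2} (hf : DifferentiableAt ℝ f p)
    (hg : DifferentiableAt ℝ g p) (v : P2) :
    DD v (fun q => f q - g q) p = DD v f p - DD v g p := by
  simp [DD, fderiv_fun_sub hf hg]

lemma DD_add {f g : P2 → ℝ} {p : P2} (hf : DifferentiableAt ℝ f p)
    (hg : DifferentiableAt ℝ g p) (v : P2) :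
    DD v (fun q => f q + g q) p = DD v f p + DD v g p := by
  simp [DD, fderiv_fun_add hf hg]

lemma DD_const_mul {f : P2 → ℝ} {p : P2} (hf : DifferentiableAt ℝ f p) (c : ℝ) (v : P2) :
    DD v (fun q => c * f q) p = c * DD v f p := by
  simp [DD, fderiv_const_mul hf c]

lemma DD_snd_apply (k : Fin 2) (p v : P2) : DD v (fun q : P2 => q.2 k) p = v.2 k := by
  have h : HasFDerivAt (fun q : P2 => q.2 k)
      ((ContinuousLinearMap.proj k).comp (ContinuousLinearMap.snd ℝ ℝ (Fin 2 → ℝ))) p :=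
    ((ContinuousLinearMap.proj k).comp (ContinuousLinearMap.snd ℝ ℝ (Fin 2 → ℝ))).hasFDerivAt
  simp [DD, h.fderiv]

lemma hasFDerivAt_expLin (a : ℝ) (p : P2) :
    HasFDerivAt (fun q : P2 => Real.exp (a * q.1))
      (Real.exp (a * p.1) • (a • ContinuousLinearMap.fst ℝ ℝ (Fin 2 → ℝ))) p := by
  have h1 : HasFDerivAt (fun q : P2 => a * q.1)
      (a • ContinuousLinearMap.fst ℝ ℝ (Fin 2 → ℝ)) p :=
    (hasFDerivAt_fst).const_smul a
  exact (Real.hasDerivAt_exp (a * p.1)).comp_hasFDerivAt p h1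

lemma DD_expLin (a : ℝ) (p v : P2) :
    DD v (fun q : P2 => Real.exp (a * q.1)) p = Real.exp (a * p.1) * (a * v.1) := by
  simp [DD, (hasFDerivAt_expLin a p).fderiv, smul_eq_mul]

lemma second_deriv_nonpos_at_max {φ φ' : ℝ → ℝ} {c : ℝ}
    (h1 : ∀ s, HasDerivAt φ (φ' s) s) (h2 : HasDerivAt φ' c 0)
    (hmax : IsLocalMax φ 0) : c ≤ 0 := by
  by_contra hc
  push_neg at hc
  have hφ'0 : φ' 0 = 0 := by
    have := hmax.deriv_eq_zero
    rwa [(h1 0).deriv] at this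
  have hslope : Tendsto (fun s => φ' s / s) (𝓝[≠] (0:ℝ)) (𝓝 c) := by
    have h' := hasDerivAt_iff_tendsto_slope.mp h2
    apply h'.congr'
    filter_upwards [self_mem_nhdsWithin] with s hs
    rw [slope_def_field, hφ'0]
    simp only [sub_zero]
  have hpos : ∀ᶠ s in 𝓝[>] (0:ℝ), 0 < φ' s / s := by
    have h' : Tendsto (fun s => φ' s / s) (𝓝[>] (0:ℝ)) (𝓝 c) :=
      hslope.mono_left (nhdsWithin_mono 0 (fun s hs => ne_of_gt hs))
    exact h'.eventually (eventually_gt_nhds hc)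
  rw [eventually_nhdsWithin_iff] at hpos
  obtain ⟨a, ha, hA⟩ := Metric.eventually_nhds_iff_ball.mp hpos
  obtain ⟨b, hb, hB⟩ := Metric.eventually_nhds_iff_ball.mp hmax
  set r := min a b with hr
  have hr0 : 0 < r := lt_min ha hb
  have hderivpos : ∀ s ∈ Set.Ioo (0:ℝ) r, 0 < deriv φ s := by
    intro s hs
    have hsb : s ∈ Metric.ball (0:ℝ) a := by
      simp only [Metric.mem_ball, Real.dist_eq, sub_zero, abs_of_pos hs.1]
      exact lt_of_lt_of_le hs.2 (min_le_left _ _)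
    have h3 := hA s hsb hs.1
    rw [(h1 s).deriv]
    by_contra hle
    push_neg at hle
    have : φ' s / s ≤ 0 := div_nonpos_of_nonpos_of_nonneg hle hs.1.le
    linarith
  have hmono : StrictMonoOn φ (Set.Icc 0 r) := by
    apply strictMonoOn_of_deriv_pos (convex_Icc 0 r)
    · exact Continuous.continuousOn (by
        have : Differentiable ℝ φ := fun s => (h1 s).differentiableAt
        exact this.continuous)
    · intro s hs
      rw [interior_Icc] at hs
      exact hderivpos s hs
  have h4 : φ 0 < φ (r/2) :=
    hmono (by constructor <;> linarith) (by constructor <;> linarith) (by linarith)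
  have h5 : φ (r/2) ≤ φ 0 := by
    apply hB
    simp only [Metric.mem_ball, Real.dist_eq, sub_zero, abs_of_pos (by linarith : (0:ℝ) < r/2)]
    have : r ≤ b := min_le_right _ _
    linarith
  linarith

lemma deriv_nonneg_at_right_max {ψ : ℝ → ℝ} {d t₀ : ℝ}
    (h1 : HasDerivAt ψ d t₀) (ht : 0 < t₀)
    (hmax : ∀ t ∈ Set.Icc 0 t₀, ψ t ≤ ψ t₀) : 0 ≤ d := by
  have hslope : Tendsto (slope ψ t₀) (𝓝[<] t₀) (𝓝 d) :=
    (hasDerivAt_iff_tendsto_slope.mp h1).mono_left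
      (nhdsWithin_mono t₀ (fun s hs => ne_of_lt hs))
  have hnn : ∀ᶠ t in 𝓝[<] t₀, 0 ≤ slope ψ t₀ t := by
    have hIoo : Set.Ioo 0 t₀ ∈ 𝓝[<] t₀ :=
      mem_nhdsWithin.mpr ⟨Set.Ioi 0, isOpen_Ioi, ht, by
        intro s hs; exact ⟨hs.1, hs.2⟩⟩
    filter_upwards [hIoo] with t htm
    rw [slope_def_field]
    apply div_nonneg_iff.mpr
    right
    exact ⟨by have := hmax t ⟨htm.1.le, htm.2.le⟩; linarith, by linarith [htm.2]⟩
  exact ge_of_tendsto hslope hnn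

-- ‖x‖² ≤ x₀² + x₁² for the sup norm on Fin 2 → ℝ
lemma sq_norm_le (x : Fin 2 → ℝ) : ‖x‖^2 ≤ x 0^2 + x 1^2 := by
  have h : ‖x‖ ≤ Real.sqrt (x 0^2 + x 1^2) := by
    apply pi_norm_le_iff_of_nonneg (Real.sqrt_nonneg _) |>.mpr
    intro i
    have key : ∀ j : Fin 2, x j ^ 2 ≤ x 0 ^ 2 + x 1 ^ 2 := by
      intro j
      match j with
      | 0 => nlinarith [sq_nonneg (x 1)]
      | 1 => nlinarith [sq_nonneg (x 0)]
    rw [Real.norm_eq_abs, ← Real.sqrt_sq_eq_abs]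
    exact Real.sqrt_le_sqrt (key i)
  calc ‖x‖^2 ≤ Real.sqrt (x 0^2 + x 1^2)^2 := by
        apply pow_le_pow_left₀ (norm_nonneg _) h _
    _ = x 0^2 + x 1^2 := Real.sq_sqrt (by positivity)

def E1f (a : ℝ) : P2 → ℝ := fun q => Real.exp (a * q.1)
def Qf : P2 → ℝ := fun q => 1 + (q.2 0 * q.2 0 + q.2 1 * q.2 1)
def gf (μ lam δ : ℝ) (ρ : P2 → ℝ) : P2 → ℝ :=
  fun q => E1f (-μ) q * ρ q - δ * (Qf q * E1f lam q)

lemma Dt_eq_DD {E : Type*} [NormedAddCommGroup E] [NormedSpace ℝ E]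
    (f : P2 → E) (p : P2) : Dt f p = DD ((1:ℝ), (0 : Fin 2 → ℝ)) f p := rfl

lemma Dx_eq_DD {E : Type*} [NormedAddCommGroup E] [NormedSpace ℝ E]
    (k : Fin 2) (f : P2 → E) (p : P2) :
    Dx k f p = DD ((0:ℝ), Pi.single k (1:ℝ)) f p := rfl

lemma E1f_pos (a : ℝ) (p : P2) : 0 < E1f a p := Real.exp_pos _

lemma diff_E1f (a : ℝ) (p : P2) : DifferentiableAt ℝ (E1f a) p :=
  (hasFDerivAt_expLin a p).differentiableAt

lemma DD_E1f (a : ℝ) (p vv : P2) : DD vv (E1f a) p = E1f a p * (a * vv.1) :=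
  DD_expLin a p vv

lemma contDiff_E1f (a : ℝ) : ContDiff ℝ (⊤ : ℕ∞) (E1f a) :=
  Real.contDiff_exp.comp (contDiff_const.mul contDiff_fst)

lemma contDiff_coord (k : Fin 2) : ContDiff ℝ (⊤ : ℕ∞) (fun q : P2 => q.2 k) :=
  (ContinuousLinearMap.proj (R := ℝ) (φ := fun _ : Fin 2 => ℝ) k).contDiff.comp contDiff_snd

lemma contDiff_Qf : ContDiff ℝ (⊤ : ℕ∞) Qf :=
  contDiff_const.add (((contDiff_coord 0).mul (contDiff_coord 0)).add
    ((contDiff_coord 1).mul (contDiff_coord 1)))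

lemma contDiff_gf (μ lam δ : ℝ) {ρ : P2 → ℝ} (hρ : ContDiff ℝ (⊤ : ℕ∞) ρ) :
    ContDiff ℝ (⊤ : ℕ∞) (gf μ lam δ ρ) :=
  ((contDiff_E1f (-μ)).mul hρ).sub
    (contDiff_const.mul (contDiff_Qf.mul (contDiff_E1f lam)))

lemma DD_Qf (p vv : P2) : DD vv Qf p
    = vv.2 0 * p.2 0 + p.2 0 * vv.2 0 + (vv.2 1 * p.2 1 + p.2 1 * vv.2 1) := by
  have d0 : DifferentiableAt ℝ (fun q : P2 => q.2 0) p :=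
    ((contDiff_coord 0).differentiable (by simp)) p
  have d1 : DifferentiableAt ℝ (fun q : P2 => q.2 1) p :=
    ((contDiff_coord 1).differentiable (by simp)) p
  have : Qf = fun q : P2 => (1:ℝ) + (q.2 0 * q.2 0 + q.2 1 * q.2 1) := rfl
  rw [this, DD_add (differentiableAt_const _) ((d0.fun_mul d0).fun_add (d1.fun_mul d1)),
    DD_add (d0.fun_mul d0) (d1.fun_mul d1), DD_mul d0 d0, DD_mul d1 d1,
    DD_snd_apply, DD_snd_apply]
  have hc : DD vv (fun _ : P2 => (1:ℝ)) p = 0 := by simp [DD]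
  rw [hc]
  ring

lemma single_dot (k : Fin 2) (y : Fin 2 → ℝ) :
    (Pi.single k 1 : Fin 2 → ℝ) 0 * y 0 + y 0 * (Pi.single k 1 : Fin 2 → ℝ) 0
      + ((Pi.single k 1 : Fin 2 → ℝ) 1 * y 1 + y 1 * (Pi.single k 1 : Fin 2 → ℝ) 1)
      = 2 * y k := by
  fin_cases k <;> simp [Pi.single_apply] <;> ring

lemma Dx_gf (μ lam δ : ℝ) {ρ : P2 → ℝ} (hρ : ContDiff ℝ (⊤ : ℕ∞) ρ) (k : Fin 2) :
    Dx k (gf μ lam δ ρ) = fun p =>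
      E1f (-μ) p * Dx k ρ p - δ * (2 * p.2 k * E1f lam p) := by
  funext p
  have hρd : DifferentiableAt ℝ ρ p := (hρ.differentiable (by simp)) p
  have hQd : DifferentiableAt ℝ Qf p := (contDiff_Qf.differentiable (by simp)) p
  have hgf : gf μ lam δ ρ = fun q => E1f (-μ) q * ρ q - δ * (Qf q * E1f lam q) := rfl
  rw [hgf, Dx_eq_DD,
    DD_sub ((diff_E1f (-μ) p).fun_mul hρd) ((differentiableAt_const δ).fun_mul (hQd.fun_mul (diff_E1f lam p))),
    DD_mul (diff_E1f (-μ) p) hρd,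
    DD_const_mul (hQd.fun_mul (diff_E1f lam p)),
    DD_mul hQd (diff_E1f lam p), DD_Qf, DD_E1f, DD_E1f]
  dsimp only
  rw [single_dot k p.2,
    show DD ((0:ℝ), (Pi.single k 1 : Fin 2 → ℝ)) ρ p = Dx k ρ p from rfl]
  ring

lemma DxDx_gf (μ lam δ : ℝ) {ρ : P2 → ℝ} (hρ : ContDiff ℝ (⊤ : ℕ∞) ρ) (k : Fin 2) (p : P2) :
    Dx k (Dx k (gf μ lam δ ρ)) p
      = E1f (-μ) p * Dx k (Dx k ρ) p - δ * (2 * E1f lam p) := by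
  have hDxρ : ContDiff ℝ (⊤ : ℕ∞) (Dx k ρ) := contDiff_DD ((0:ℝ), Pi.single k (1:ℝ)) hρ
  have hDxρd : DifferentiableAt ℝ (Dx k ρ) p := (hDxρ.differentiable (by simp)) p
  have hkd : DifferentiableAt ℝ (fun q : P2 => q.2 k) p :=
    ((contDiff_coord k).differentiable (by simp)) p
  rw [Dx_gf μ lam δ hρ k, Dx_eq_DD,
    DD_sub ((diff_E1f (-μ) p).fun_mul hDxρd)
      ((differentiableAt_const δ).fun_mul (((differentiableAt_const (2:ℝ)).fun_mul hkd).fun_mul (diff_E1f lam p))),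
    DD_mul (diff_E1f (-μ) p) hDxρd,
    DD_const_mul (((differentiableAt_const (2:ℝ)).fun_mul hkd).fun_mul (diff_E1f lam p)),
    DD_mul ((differentiableAt_const (2:ℝ)).fun_mul hkd) (diff_E1f lam p),
    DD_mul (differentiableAt_const (2:ℝ)) hkd,
    DD_E1f, DD_E1f, DD_snd_apply]
  have hc : DD ((0:ℝ), Pi.single k (1:ℝ)) (fun _ : P2 => (2:ℝ)) p = 0 := by simp [DD]
  rw [hc]
  dsimp only
  rw [show DD ((0:ℝ), (Pi.single k 1 : Fin 2 → ℝ)) (Dx k ρ) p = Dx k (Dx k ρ) p from rfl,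
    show (Pi.single k 1 : Fin 2 → ℝ) k = 1 by simp]
  ring

lemma Dt_gf (μ lam δ : ℝ) {ρ : P2 → ℝ} (hρ : ContDiff ℝ (⊤ : ℕ∞) ρ) (p : P2) :
    Dt (gf μ lam δ ρ) p
      = -μ * E1f (-μ) p * ρ p + E1f (-μ) p * Dt ρ p
        - δ * (Qf p * (lam * E1f lam p)) := by
  have hρd : DifferentiableAt ℝ ρ p := (hρ.differentiable (by simp)) p
  have hQd : DifferentiableAt ℝ Qf p := (contDiff_Qf.differentiable (by simp)) p
  have hgf : gf μ lam δ ρ = fun q => E1f (-μ) q * ρ q - δ * (Qf q * E1f lam q) := rfl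
  rw [hgf, Dt_eq_DD,
    DD_sub ((diff_E1f (-μ) p).fun_mul hρd) ((differentiableAt_const δ).fun_mul (hQd.fun_mul (diff_E1f lam p))),
    DD_mul (diff_E1f (-μ) p) hρd,
    DD_const_mul (hQd.fun_mul (diff_E1f lam p)),
    DD_mul hQd (diff_E1f lam p), DD_Qf, DD_E1f, DD_E1f]
  dsimp only
  rw [show DD ((1:ℝ), (0 : Fin 2 → ℝ)) ρ p = Dt ρ p from rfl]
  simp only [Pi.zero_apply]
  ring

set_option maxHeartbeats 1000000 in
theorem max_principle (ε T : ℝ) (hε : 0 < ε) (hT : 0 < T)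
    (ρ S : P2 → ℝ) (hρ : ContDiff ℝ (⊤ : ℕ∞) ρ)
    (Cs M : ℝ)
    (hM : ∀ p : P2, p.1 ∈ Set.Icc 0 T → |ρ p| ≤ M)
    (hS : ∀ p : P2, p.1 ∈ Set.Icc 0 T → |S p| ≤ Cs)
    (hpde : ∀ p : P2, p.1 ∈ Set.Icc 0 T →
      ε * Dt ρ p = (∑ k : Fin 2, Dx k (Dx k ρ) p) - 2 * S p * ρ p)
    (h0 : ∀ x : Fin 2 → ℝ, ρ (0, x) = 0) :
    ∀ p : P2, p.1 ∈ Set.Icc 0 T → ρ p ≤ 0 := by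
  have hCs0 : 0 ≤ Cs := le_trans (abs_nonneg _) (hS (0, fun _ => 0) ⟨le_refl 0, hT.le⟩)
  have hM0 : 0 ≤ M := le_trans (abs_nonneg _) (hM (0, fun _ => 0) ⟨le_refl 0, hT.le⟩)
  set μ : ℝ := 2 * Cs / ε with hμdef
  set lam : ℝ := 5 / ε with hlamdef
  have hμ0 : 0 ≤ μ := by positivity
  have hlam0 : 0 ≤ lam := by positivity
  have hεμ : ε * μ = 2 * Cs := by rw [hμdef]; field_simp
  have hεlam : ε * lam = 5 := by rw [hlamdef]; field_simp
  have hQ1 : ∀ p : P2, 1 ≤ Qf p := by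
    intro p
    have h1 := mul_self_nonneg (p.2 0)
    have h2 := mul_self_nonneg (p.2 1)
    simp only [Qf]; linarith
  suffices key : ∀ δ : ℝ, 0 < δ → ∀ p : P2, p.1 ∈ Set.Icc 0 T →
      0 ≤ δ * (Qf p * E1f lam p) - E1f (-μ) p * ρ p by
    intro p hp
    have hc : 0 < Qf p * E1f lam p :=
      mul_pos (lt_of_lt_of_le one_pos (hQ1 p)) (E1f_pos _ _)
    have h1 : E1f (-μ) p * ρ p ≤ 0 := by
      by_contra h
      push_neg at h
      have hδ : 0 < (E1f (-μ) p * ρ p) / (2 * (Qf p * E1f lam p)) := by positivity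
      have h2 := key _ hδ p hp
      rw [div_mul_eq_mul_div] at h2
      have h3 : E1f (-μ) p * ρ p * (Qf p * E1f lam p) / (2 * (Qf p * E1f lam p))
          = E1f (-μ) p * ρ p / 2 := by
        exact mul_div_mul_right _ _ hc.ne'
      rw [h3] at h2
      linarith
    nlinarith [E1f_pos (-μ) p]
  intro δ hδ
  by_contra hcon
  push_neg at hcon
  obtain ⟨p₀, hp₀, hgp₀⟩ := hcon
  set g : P2 → ℝ := gf μ lam δ ρ with hgdef
  have hgval : ∀ p : P2, g p = E1f (-μ) p * ρ p - δ * (Qf p * E1f lam p) := fun p => rfl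
  have hgp₀' : 0 < g p₀ := by rw [hgval]; linarith
  have hgc : ContDiff ℝ (⊤ : ℕ∞) g := contDiff_gf μ lam δ hρ
  have hgcont : Continuous g := hgc.continuous
  set R : ℝ := Real.sqrt ((M + 1) / δ) with hRdef
  have hR2 : R ^ 2 = (M + 1) / δ := Real.sq_sqrt (by positivity)
  have hR0 : 0 ≤ R := Real.sqrt_nonneg _
  -- outside the ball of radius R, g < 0
  have hout : ∀ p : P2, p.1 ∈ Set.Icc 0 T → R ≤ ‖p.2‖ → g p < 0 := by
    intro p hp hRp
    have hE1le : E1f (-μ) p ≤ 1 := by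
      have : -μ * p.1 ≤ 0 := mul_nonpos_of_nonpos_of_nonneg (by linarith) hp.1
      exact Real.exp_le_one_iff.mpr this
    have hE2ge : 1 ≤ E1f lam p := by
      have : 0 ≤ lam * p.1 := mul_nonneg hlam0 hp.1
      exact Real.one_le_exp_iff.mpr this
    have hρle : ρ p ≤ M := le_trans (le_abs_self _) (hM p hp)
    have hE1pos := E1f_pos (-μ) p
    have hE1ρ : E1f (-μ) p * ρ p ≤ M := by nlinarith [abs_nonneg (ρ p), (abs_le.mp (hM p hp)).1]
    have hQge : (M + 1) / δ + 1 ≤ Qf p := by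
      have h1 : R ^ 2 ≤ ‖p.2‖ ^ 2 := pow_le_pow_left₀ hR0 hRp 2
      have h2 := sq_norm_le p.2
      have : Qf p = 1 + (p.2 0 * p.2 0 + p.2 1 * p.2 1) := rfl
      rw [this]
      nlinarith
    have hQE2 : (M + 1) / δ + 1 ≤ Qf p * E1f lam p := by
      nlinarith [hQ1 p]
    have hδQ : M + 1 + δ ≤ δ * (Qf p * E1f lam p) := by
      have h5 := mul_le_mul_of_nonneg_left hQE2 hδ.le
      have h4 : δ * ((M + 1) / δ) = M + 1 := by field_simp
      rw [mul_add] at h5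
      linarith
    rw [hgval]
    linarith
  set K : Set P2 := Set.Icc 0 T ×ˢ Metric.closedBall (0 : Fin 2 → ℝ) R with hKdef
  have hKc : IsCompact K := isCompact_Icc.prod (isCompact_closedBall _ _)
  have hp₀K : p₀ ∈ K := by
    refine Set.mem_prod.mpr ⟨hp₀, Metric.mem_closedBall.mpr ?_⟩
    rw [dist_zero_right]
    by_contra h
    push_neg at h
    exact absurd (hout p₀ hp₀ h.le) (by linarith)
  obtain ⟨pm, hpmK, hpm⟩ := hKc.exists_isMaxOn ⟨p₀, hp₀K⟩ hgcont.continuousOn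
  have hgpm : 0 < g pm := lt_of_lt_of_le hgp₀' (hpm hp₀K)
  have hpmt : pm.1 ∈ Set.Icc 0 T := (Set.mem_prod.mp hpmK).1
  have hpmx : ‖pm.2‖ ≤ R := by
    have := (Set.mem_prod.mp hpmK).2
    rwa [Metric.mem_closedBall, dist_zero_right] at this
  have hxlt : ‖pm.2‖ < R := by
    rcases lt_or_eq_of_le hpmx with h | h
    · exact h
    · exact absurd (hout pm hpmt h.ge) (by linarith)
  have htpos : 0 < pm.1 := by
    rcases lt_or_eq_of_le hpmt.1 with h | h
    · exact h
    · exfalso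
      have hpm0 : pm = (0, pm.2) := by
        apply Prod.ext
        · exact h.symm
        · rfl
      have : g pm = -(δ * (Qf pm * E1f lam pm)) := by
        have hρ0 : ρ pm = 0 := by rw [hpm0]; exact h0 pm.2
        rw [hgval, hρ0]; ring
      nlinarith [mul_pos (mul_pos (lt_of_lt_of_le one_pos (hQ1 pm)) (E1f_pos lam pm)) hδ,
        mul_pos (lt_of_lt_of_le one_pos (hQ1 pm)) (E1f_pos lam pm)]
  -- spatial second derivative test
  have hgdiff : Differentiable ℝ g := hgc.differentiable (by simp)
  have hspace : ∀ k : Fin 2, Dx k (Dx k g) pm ≤ 0 := by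
    intro k
    have hne : ‖(Pi.single k 1 : Fin 2 → ℝ)‖ = 1 := by
      rw [Pi.norm_single]; simp
    set c : ℝ → P2 := fun s => (pm.1, pm.2 + s • (Pi.single k 1 : Fin 2 → ℝ)) with hcdef
    have hc0 : c 0 = pm := by
      rw [hcdef]; simp
    have hcd : ∀ s : ℝ, HasDerivAt c ((0:ℝ), (Pi.single k 1 : Fin 2 → ℝ)) s := by
      intro s
      apply HasDerivAt.prodMk
      · exact hasDerivAt_const s pm.1
      · have h1 : HasDerivAt (fun s : ℝ => s • (Pi.single k 1 : Fin 2 → ℝ))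
            (Pi.single k 1 : Fin 2 → ℝ) s := by
          simpa using (hasDerivAt_id s).smul_const (Pi.single k 1 : Fin 2 → ℝ)
        simpa using h1.const_add pm.2
    have hφ : ∀ s : ℝ, HasDerivAt (fun s => g (c s)) (Dx k g (c s)) s := by
      intro s
      have hg' : HasFDerivAt g (fderiv ℝ g (c s)) (c s) := (hgdiff (c s)).hasFDerivAt
      exact hg'.comp_hasDerivAt s (hcd s)
    have hDxgd : Differentiable ℝ (Dx k g) :=
      (contDiff_DD ((0:ℝ), Pi.single k (1:ℝ)) hgc).differentiable (by simp)
    have hφ' : HasDerivAt (fun s => Dx k g (c s)) (Dx k (Dx k g) pm) 0 := by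
      have hg' : HasFDerivAt (Dx k g) (fderiv ℝ (Dx k g) (c 0)) (c 0) :=
        (hDxgd (c 0)).hasFDerivAt
      have := hg'.comp_hasDerivAt 0 (hcd 0)
      rw [hc0] at this
      exact this
    apply second_deriv_nonpos_at_max hφ hφ'
    -- local max
    have hball : Metric.ball (0:ℝ) (R - ‖pm.2‖) ∈ 𝓝 (0:ℝ) :=
      Metric.ball_mem_nhds 0 (by linarith)
    filter_upwards [hball] with s hs
    have hsabs : |s| < R - ‖pm.2‖ := by
      rwa [Metric.mem_ball, Real.dist_eq, sub_zero] at hs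
    have hmem : c s ∈ K := by
      refine Set.mem_prod.mpr ⟨hpmt, Metric.mem_closedBall.mpr ?_⟩
      rw [dist_zero_right]
      calc ‖pm.2 + s • (Pi.single k 1 : Fin 2 → ℝ)‖
          ≤ ‖pm.2‖ + ‖s • (Pi.single k 1 : Fin 2 → ℝ)‖ := norm_add_le _ _
        _ = ‖pm.2‖ + |s| := by rw [norm_smul, hne, Real.norm_eq_abs, mul_one]
        _ ≤ R := by linarith
    have := hpm hmem
    rw [← hc0] at this
    exact this
  -- time derivative test
  have htime : 0 ≤ Dt g pm := by
    set c : ℝ → P2 := fun t => (t, pm.2) with hcdef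
    have hc0 : c pm.1 = pm := by rw [hcdef]
    have hcd : ∀ t : ℝ, HasDerivAt c ((1:ℝ), (0 : Fin 2 → ℝ)) t := by
      intro t
      exact (hasDerivAt_id t).prodMk (hasDerivAt_const t pm.2)
    have hψ : HasDerivAt (fun t => g (c t)) (Dt g pm) pm.1 := by
      have hg' : HasFDerivAt g (fderiv ℝ g (c pm.1)) (c pm.1) := (hgdiff (c pm.1)).hasFDerivAt
      have := hg'.comp_hasDerivAt pm.1 (hcd pm.1)
      rw [hc0] at this
      exact this
    apply deriv_nonneg_at_right_max hψ htpos
    intro t ht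
    have hmem : c t ∈ K := by
      refine Set.mem_prod.mpr ⟨⟨ht.1, le_trans ht.2 hpmt.2⟩, Metric.mem_closedBall.mpr ?_⟩
      rw [dist_zero_right]
      exact hpmx
    have := hpm hmem
    rw [← hc0] at this
    exact this
  -- the PDE at the max point gives a contradiction
  have hF1 := hpde pm hpmt
  have hF2 := Dt_gf μ lam δ hρ pm
  have hsum : (∑ k : Fin 2, Dx k (Dx k g) pm)
      = E1f (-μ) pm * (∑ k : Fin 2, Dx k (Dx k ρ) pm) - δ * (4 * E1f lam pm) := by
    rw [Fin.sum_univ_two, Fin.sum_univ_two, DxDx_gf μ lam δ hρ 0 pm, DxDx_gf μ lam δ hρ 1 pm]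
    ring
  have hΔle : (∑ k : Fin 2, Dx k (Dx k g) pm) ≤ 0 := by
    rw [Fin.sum_univ_two]
    linarith [hspace 0, hspace 1]
  have e3 : ε * Dt g pm = -(2*Cs + 2*S pm)*(E1f (-μ) pm * ρ pm)
      + (∑ k : Fin 2, Dx k (Dx k g) pm) + 4*δ*E1f lam pm
      - 5*(δ*(Qf pm*E1f lam pm)) := by
    linear_combination ε * hF2 + (E1f (-μ) pm) * hF1 - hsum
      - (E1f (-μ) pm * ρ pm) * hεμ - (δ * (Qf pm * E1f lam pm)) * hεlam
  have hF4 : E1f (-μ) pm * ρ pm = g pm + δ * (Qf pm * E1f lam pm) := by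
    rw [hgval]; ring
  have hδQB : 0 < δ * (Qf pm * E1f lam pm) :=
    mul_pos hδ (mul_pos (lt_of_lt_of_le one_pos (hQ1 pm)) (E1f_pos lam pm))
  have hAr : 0 < E1f (-μ) pm * ρ pm := by rw [hF4]; linarith
  have hss : 0 ≤ 2*Cs + 2*S pm := by
    have := (abs_le.mp (hS pm hpmt)).1
    linarith
  have h1 : 0 ≤ (2*Cs + 2*S pm) * (E1f (-μ) pm * ρ pm) := mul_nonneg hss hAr.le
  have h2' : E1f lam pm ≤ Qf pm * E1f lam pm :=
    le_mul_of_one_le_left (E1f_pos lam pm).le (hQ1 pm)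
  have h2 : δ * E1f lam pm ≤ δ * (Qf pm * E1f lam pm) :=
    mul_le_mul_of_nonneg_left h2' hδ.le
  have h3 : 0 ≤ ε * Dt g pm := mul_nonneg hε.le htime
  linarith [mul_pos hδ (E1f_pos lam pm)]

-- PART A LEMMAS GO HERE

lemma DD_neg' {f : P2 → ℝ} (p v : P2) : DD v (fun q => -f q) p = -DD v f p := by
  simp [DD, fderiv_neg]

lemma DD_comp_apply {f : P2 → V3} {p : P2} (hf : DifferentiableAt ℝ f p) (i : Fin 3) (v : P2) :
    DD v (fun q => f q i) p = DD v f p i := by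
  have h : HasFDerivAt (fun q => f q i)
      ((ContinuousLinearMap.proj i).comp (fderiv ℝ f p)) p :=
    (hasFDerivAt_pi'.mp hf.hasFDerivAt) i
  simp [DD, h.fderiv]

lemma contDiff_apply_comp {f : P2 → V3} (hf : ContDiff ℝ (⊤ : ℕ∞) f) (i : Fin 3) :
    ContDiff ℝ (⊤ : ℕ∞) (fun q => f q i) :=
  (ContinuousLinearMap.proj (R := ℝ) (φ := fun _ : Fin 3 => ℝ) i).contDiff.comp hf

lemma DD_mdot {f g : P2 → V3} {p : P2} (hf : DifferentiableAt ℝ f p)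
    (hg : DifferentiableAt ℝ g p) (v : P2) :
    DD v (fun q => mdot (f q) (g q)) p
      = mdot (DD v f p) (g p) + mdot (f p) (DD v g p) := by
  have hfi : ∀ i, DifferentiableAt ℝ (fun q => f q i) p := fun i =>
    ((hasFDerivAt_pi'.mp hf.hasFDerivAt) i).differentiableAt
  have hgi : ∀ i, DifferentiableAt ℝ (fun q => g q i) p := fun i =>
    ((hasFDerivAt_pi'.mp hg.hasFDerivAt) i).differentiableAt
  have hrw : (fun q => mdot (f q) (g q))
      = fun q => (-(f q 0 * g q 0) + f q 1 * g q 1) + f q 2 * g q 2 := rfl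
  rw [hrw,
    DD_add ((((hfi 0).fun_mul (hgi 0)).fun_neg).fun_add ((hfi 1).fun_mul (hgi 1))) ((hfi 2).fun_mul (hgi 2)),
    DD_add (((hfi 0).fun_mul (hgi 0)).fun_neg) ((hfi 1).fun_mul (hgi 1)),
    DD_neg', DD_mul (hfi 0) (hgi 0), DD_mul (hfi 1) (hgi 1), DD_mul (hfi 2) (hgi 2),
    DD_comp_apply hf 0, DD_comp_apply hf 1, DD_comp_apply hf 2,
    DD_comp_apply hg 0, DD_comp_apply hg 1, DD_comp_apply hg 2]
  simp only [mdot]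
  ring

lemma mdot_comm (v w : V3) : mdot v w = mdot w v := by simp only [mdot]; ring

lemma mdot_abs_le (v w : V3) : |mdot v w| ≤ 3 * ‖v‖ * ‖w‖ := by
  have hv : ∀ i, |v i| ≤ ‖v‖ := fun i => by
    simpa [Real.norm_eq_abs] using norm_le_pi_norm v i
  have hw : ∀ i, |w i| ≤ ‖w‖ := fun i => by
    simpa [Real.norm_eq_abs] using norm_le_pi_norm w i
  have h1 : |mdot v w| ≤ |v 0 * w 0| + |v 1 * w 1| + |v 2 * w 2| := by
    simp only [mdot]
    calc |-(v 0 * w 0) + v 1 * w 1 + v 2 * w 2|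
        ≤ |-(v 0 * w 0) + v 1 * w 1| + |v 2 * w 2| := abs_add_le _ _
      _ ≤ |-(v 0 * w 0)| + |v 1 * w 1| + |v 2 * w 2| := by linarith [abs_add_le (-(v 0 * w 0)) (v 1 * w 1)]
      _ = |v 0 * w 0| + |v 1 * w 1| + |v 2 * w 2| := by rw [abs_neg]
  have h2 : ∀ i : Fin 3, |v i * w i| ≤ ‖v‖ * ‖w‖ := fun i => by
    rw [abs_mul]
    exact mul_le_mul (hv i) (hw i) (abs_nonneg _) (norm_nonneg _)
  have := h2 0; have := h2 1; have := h2 2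
  linarith

lemma DD_const' (c : ℝ) (p v : P2) : DD v (fun _ : P2 => c) p = 0 := by simp [DD]

lemma contDiff_mdot {f g : P2 → V3} (hf : ContDiff ℝ (⊤ : ℕ∞) f) (hg : ContDiff ℝ (⊤ : ℕ∞) g) :
    ContDiff ℝ (⊤ : ℕ∞) (fun q => mdot (f q) (g q)) := by
  have hrw : (fun q => mdot (f q) (g q))
      = fun q => (-(f q 0 * g q 0) + f q 1 * g q 1) + f q 2 * g q 2 := rfl
  rw [hrw]
  exact ((((contDiff_apply_comp hf 0).mul (contDiff_apply_comp hg 0)).neg).add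
    ((contDiff_apply_comp hf 1).mul (contDiff_apply_comp hg 1))).add
    ((contDiff_apply_comp hf 2).mul (contDiff_apply_comp hg 2))

section PartA

variable {u : P2 → V3}

lemma Dt_mdot_self (hu : ContDiff ℝ (⊤ : ℕ∞) u) (p : P2) :
    Dt (fun q => mdot (u q) (u q)) p = 2 * mdot (u p) (Dt u p) := by
  have hud : DifferentiableAt ℝ u p := (hu.differentiable (by simp)) p
  have h := DD_mdot hud hud ((1:ℝ), (0 : Fin 2 → ℝ))
  rw [Dt_eq_DD, h, show DD ((1:ℝ), (0 : Fin 2 → ℝ)) u p = Dt u p from rfl,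
    mdot_comm (Dt u p) (u p)]
  ring

lemma Dx_mdot_self (hu : ContDiff ℝ (⊤ : ℕ∞) u) (k : Fin 2) :
    Dx k (fun q => mdot (u q) (u q)) = fun p => 2 * mdot (u p) (Dx k u p) := by
  funext p
  have hud : DifferentiableAt ℝ u p := (hu.differentiable (by simp)) p
  have h := DD_mdot hud hud ((0:ℝ), Pi.single k (1:ℝ))
  rw [Dx_eq_DD, h, show DD ((0:ℝ), Pi.single k (1:ℝ)) u p = Dx k u p from rfl,
    mdot_comm (Dx k u p) (u p)]
  ring

lemma contDiff_Dxu (hu : ContDiff ℝ (⊤ : ℕ∞) u) (k : Fin 2) : ContDiff ℝ (⊤ : ℕ∞) (Dx k u) :=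
  contDiff_DD ((0:ℝ), Pi.single k (1:ℝ)) hu

lemma DxDx_mdot_self (hu : ContDiff ℝ (⊤ : ℕ∞) u) (k : Fin 2) (p : P2) :
    Dx k (Dx k (fun q => mdot (u q) (u q))) p
      = 2 * mdot (Dx k u p) (Dx k u p) + 2 * mdot (u p) (Dx k (Dx k u) p) := by
  have hud : DifferentiableAt ℝ u p := (hu.differentiable (by simp)) p
  have hDxud : DifferentiableAt ℝ (Dx k u) p :=
    ((contDiff_Dxu hu k).differentiable (by simp)) p
  have hin : DifferentiableAt ℝ (fun q => mdot (u q) (Dx k u q)) p :=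
    ((contDiff_mdot hu (contDiff_Dxu hu k)).differentiable (by simp)) p
  rw [Dx_mdot_self hu k, Dx_eq_DD, DD_const_mul hin,
    DD_mdot hud hDxud,
    show DD ((0:ℝ), Pi.single k (1:ℝ)) u p = Dx k u p from rfl,
    show DD ((0:ℝ), Pi.single k (1:ℝ)) (Dx k u) p = Dx k (Dx k u) p from rfl]
  ring

end PartA

lemma pairing_identity {u : P2 → V3} {ε : ℝ} {p : P2}
    (heqp : ε • Dt u p - etaV (cross3 (u p) (Dt u p))
        = ∑ k : Fin 2, Dx k (Dx k u) p
          - (∑ k : Fin 2, mdot (Dx k u p) (Dx k u p)) • u p) :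
    ε * mdot (u p) (Dt u p)
      = mdot (u p) (Dx 0 (Dx 0 u) p) + mdot (u p) (Dx 1 (Dx 1 u) p)
        - (mdot (Dx 0 u p) (Dx 0 u p) + mdot (Dx 1 u p) (Dx 1 u p))
          * mdot (u p) (u p) := by
  have e : ∀ i : Fin 3,
      (ε • Dt u p) i - etaV (cross3 (u p) (Dt u p)) i
        = (∑ k : Fin 2, Dx k (Dx k u) p) i
          - ((∑ k : Fin 2, mdot (Dx k u p) (Dx k u p)) • u p) i := by
    intro i
    have := congrFun heqp i
    simpa [Pi.sub_apply] using this
  have e0 := e 0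
  have e1 := e 1
  have e2 := e 2
  simp only [cross3, cross_apply, etaV, mdot, Pi.smul_apply, smul_eq_mul, Fin.sum_univ_two,
    Pi.add_apply, Matrix.cons_val_zero, Matrix.cons_val_one, Matrix.head_cons,
    if_true] at e0 e1 e2
  rw [if_neg (by decide : ¬(1:Fin 3) = 0)] at e1
  rw [if_neg (by decide : ¬(2:Fin 3) = 0)] at e2
  have hv2 : ![u p 1 * Dt u p 2 - u p 2 * Dt u p 1, u p 2 * Dt u p 0 - u p 0 * Dt u p 2,
      u p 0 * Dt u p 1 - u p 1 * Dt u p 0] 2 = u p 0 * Dt u p 1 - u p 1 * Dt u p 0 := rfl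
  rw [hv2] at e2
  simp only [mdot]
  linear_combination (-(u p 0)) * e0 + u p 1 * e1 + u p 2 * e2

set_option maxHeartbeats 1000000 in
/-- the parabolic perturbation of the hyperbolic Schrödinger map flow
preserves the hyperboloid constraint `⟨u, ηu⟩ = −1`. -/
theorem parabolic_flow_preserves_hyperboloid
    (ε T : ℝ) (hε : 0 < ε) (hT : 0 < T)
    (u : ℝ × (Fin 2 → ℝ) → V3)
    (hu : ContDiff ℝ (⊤ : ℕ∞) u)
    (hbd : ∃ C : ℝ, ∀ p : ℝ × (Fin 2 → ℝ), p.1 ∈ Set.Icc 0 T →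
      ‖u p‖ ≤ C ∧ ‖fderiv ℝ u p‖ ≤ C ∧ ‖fderiv ℝ (fderiv ℝ u) p‖ ≤ C)
    (heq : ∀ p : ℝ × (Fin 2 → ℝ), p.1 ∈ Set.Icc 0 T →
      ε • Dt u p - etaV (cross3 (u p) (Dt u p))
        = ∑ k : Fin 2, Dx k (Dx k u) p
          - (∑ k : Fin 2, mdot (Dx k u p) (Dx k u p)) • u p)
    (h0 : ∀ x : Fin 2 → ℝ, mdot (u (0, x)) (u (0, x)) = -1) :
    ∀ p : ℝ × (Fin 2 → ℝ), p.1 ∈ Set.Icc 0 T → mdot (u p) (u p) = -1 := by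
  obtain ⟨C, hC⟩ := hbd
  have hC0 : 0 ≤ C := le_trans (norm_nonneg _) (hC (0, fun _ => 0) ⟨le_refl 0, hT.le⟩).1
  have hudiff : Differentiable ℝ u := hu.differentiable (by simp)
  have hρcont : ContDiff ℝ (⊤ : ℕ∞) (fun q : P2 => mdot (u q) (u q) + 1) :=
    (contDiff_mdot hu hu).add contDiff_const
  have hρdiff : Differentiable ℝ (fun q : P2 => mdot (u q) (u q)) :=
    (contDiff_mdot hu hu).differentiable (by simp)
  have hDtρ : ∀ p : P2, Dt (fun q : P2 => mdot (u q) (u q) + 1) p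
      = Dt (fun q : P2 => mdot (u q) (u q)) p := by
    intro p
    rw [Dt_eq_DD, Dt_eq_DD, DD_add (hρdiff p) (differentiableAt_const (1:ℝ)), DD_const']
    ring
  have hDxρ : ∀ k : Fin 2, Dx k (fun q : P2 => mdot (u q) (u q) + 1)
      = Dx k (fun q : P2 => mdot (u q) (u q)) := by
    intro k
    funext p
    rw [Dx_eq_DD, Dx_eq_DD, DD_add (hρdiff p) (differentiableAt_const (1:ℝ)), DD_const']
    ring
  have hpde : ∀ p : P2, p.1 ∈ Set.Icc 0 T →
      ε * Dt (fun q : P2 => mdot (u q) (u q) + 1) p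
        = (∑ k : Fin 2, Dx k (Dx k (fun q : P2 => mdot (u q) (u q) + 1)) p)
          - 2 * ((fun q : P2 => ∑ k : Fin 2, mdot (Dx k u q) (Dx k u q)) p)
              * ((fun q : P2 => mdot (u q) (u q) + 1) p) := by
    intro p hp
    have hpair := pairing_identity (heq p hp)
    have hDt := Dt_mdot_self hu p
    have hD0 := DxDx_mdot_self hu 0 p
    have hD1 := DxDx_mdot_self hu 1 p
    simp only [Fin.sum_univ_two]
    rw [hDtρ p, hDxρ 0, hDxρ 1, hDt, hD0, hD1]
    linear_combination 2 * hpair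
  have h0ρ : ∀ x : Fin 2 → ℝ, (fun q : P2 => mdot (u q) (u q) + 1) (0, x) = 0 := by
    intro x
    simp only [h0 x]
    ring
  have hM : ∀ p : P2, p.1 ∈ Set.Icc 0 T →
      |(fun q : P2 => mdot (u q) (u q) + 1) p| ≤ 3 * C * C + 1 := by
    intro p hp
    have h1 := mdot_abs_le (u p) (u p)
    have h2 := (hC p hp).1
    have h3 := abs_add_le (mdot (u p) (u p)) 1
    have h4 : |(1:ℝ)| = 1 := abs_one
    have h5 : 3 * ‖u p‖ * ‖u p‖ ≤ 3 * C * C := by nlinarith [norm_nonneg (u p)]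
    simp only []
    nlinarith
  have hdk : ∀ p : P2, p.1 ∈ Set.Icc 0 T → ∀ k : Fin 2, ‖Dx k u p‖ ≤ C := by
    intro p hp k
    have h1 : ‖fderiv ℝ u p ((0:ℝ), (Pi.single k 1 : Fin 2 → ℝ))‖
        ≤ ‖fderiv ℝ u p‖ * ‖((0:ℝ), (Pi.single k 1 : Fin 2 → ℝ))‖ :=
      ContinuousLinearMap.le_opNorm _ _
    have h2 : ‖((0:ℝ), (Pi.single k 1 : Fin 2 → ℝ))‖ = 1 := by
      rw [Prod.norm_def]
      simp [Pi.norm_single]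
    rw [h2, mul_one] at h1
    exact le_trans h1 (hC p hp).2.1
  have hS : ∀ p : P2, p.1 ∈ Set.Icc 0 T →
      |(fun q : P2 => ∑ k : Fin 2, mdot (Dx k u q) (Dx k u q)) p| ≤ 6 * C * C := by
    intro p hp
    have h0' := mdot_abs_le (Dx 0 u p) (Dx 0 u p)
    have h1' := mdot_abs_le (Dx 1 u p) (Dx 1 u p)
    have hk0 := hdk p hp 0
    have hk1 := hdk p hp 1
    have hb0 : 3 * ‖Dx 0 u p‖ * ‖Dx 0 u p‖ ≤ 3 * C * C := by nlinarith [norm_nonneg (Dx 0 u p)]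
    have hb1 : 3 * ‖Dx 1 u p‖ * ‖Dx 1 u p‖ ≤ 3 * C * C := by nlinarith [norm_nonneg (Dx 1 u p)]
    simp only [Fin.sum_univ_two]
    have := abs_add_le (mdot (Dx 0 u p) (Dx 0 u p)) (mdot (Dx 1 u p) (Dx 1 u p))
    linarith
  have hP1 := max_principle ε T hε hT (fun q : P2 => mdot (u q) (u q) + 1)
    (fun q : P2 => ∑ k : Fin 2, mdot (Dx k u q) (Dx k u q)) hρcont
    (6 * C * C) (3 * C * C + 1) hM hS hpde h0ρ
  have hρncont : ContDiff ℝ (⊤ : ℕ∞) (fun q : P2 => -(mdot (u q) (u q) + 1)) := hρcont.neg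
  have hpden : ∀ p : P2, p.1 ∈ Set.Icc 0 T →
      ε * Dt (fun q : P2 => -(mdot (u q) (u q) + 1)) p
        = (∑ k : Fin 2, Dx k (Dx k (fun q : P2 => -(mdot (u q) (u q) + 1))) p)
          - 2 * ((fun q : P2 => ∑ k : Fin 2, mdot (Dx k u q) (Dx k u q)) p)
              * ((fun q : P2 => -(mdot (u q) (u q) + 1)) p) := by
    intro p hp
    have hDtn : Dt (fun q : P2 => -(mdot (u q) (u q) + 1)) p
        = -Dt (fun q : P2 => mdot (u q) (u q) + 1) p := by
      rw [Dt_eq_DD, Dt_eq_DD, DD_neg']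
    have hDxn : ∀ k : Fin 2, Dx k (fun q : P2 => -(mdot (u q) (u q) + 1))
        = fun q : P2 => -(Dx k (fun q' : P2 => mdot (u q') (u q') + 1) q) := by
      intro k
      funext q
      rw [Dx_eq_DD, Dx_eq_DD, DD_neg']
    have hDxxn : ∀ k : Fin 2, Dx k (Dx k (fun q : P2 => -(mdot (u q) (u q) + 1))) p
        = -(Dx k (Dx k (fun q' : P2 => mdot (u q') (u q') + 1)) p) := by
      intro k
      rw [hDxn k, Dx_eq_DD, DD_neg', Dx_eq_DD]
    have hporig := hpde p hp
    simp only [Fin.sum_univ_two] at hporig ⊢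
    rw [hDtn, hDxxn 0, hDxxn 1]
    linarith
  have h0ρn : ∀ x : Fin 2 → ℝ, (fun q : P2 => -(mdot (u q) (u q) + 1)) (0, x) = 0 := by
    intro x
    simp only [h0 x]
    ring
  have hMn : ∀ p : P2, p.1 ∈ Set.Icc 0 T →
      |(fun q : P2 => -(mdot (u q) (u q) + 1)) p| ≤ 3 * C * C + 1 := by
    intro p hp
    have h6 := hM p hp
    simp only [] at h6 ⊢
    rw [abs_neg]
    exact h6
  have hP2 := max_principle ε T hε hT (fun q : P2 => -(mdot (u q) (u q) + 1))
    (fun q : P2 => ∑ k : Fin 2, mdot (Dx k u q) (Dx k u q)) hρncont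
    (6 * C * C) (3 * C * C + 1) hMn hS hpden h0ρn
  intro p hp
  have h1 := hP1 p hp
  have h2 := hP2 p hp
  linarith
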